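/- With notation as in the setup, for every S ⊆ {1,…,n} one has A^0_{Φ_S} + ρ·A^0_{Φ_S} = (1/2)·Σ_{γ∈Γ} γ in ℂ[Γ]. Equivalently, viewing A^0_{Φ_S} as a function on Γ, A^0_{Φ_S}(γ) + A^0_{Φ_S}(ργ) = 1/2 for every γ ∈ Γ; that is, A^0_{Φ_S} lies in the space 𝒞ℳ⁰ of class functions f for which f(γ) + f(ργ) is independent of γ. -/

import Mathlib

open MonoidAlgebra Finset

noncomputable section

/-- `Γ = G × ℤ/2ℤ` (written multiplicatively). -/
abbrev Gam (G : Type*) := G × Multiplicative (ZMod 2)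

/-- The element `ρ = (1,1) ∈ Γ` ("complex conjugation"). -/
def rhoEl (G : Type*) [Group G] : Gam G := (1, Multiplicative.ofAdd (1 : ZMod 2))

/-- Embedding of `g ∈ G` into `ℂ[Γ]` via `g ↦ (g,0)`. -/
def emb {G : Type*} [Group G] (g : G) : MonoidAlgebra ℂ (Gam G) :=
  MonoidAlgebra.of ℂ (Gam G) (g, 1)

/-- `ρ` as an element of `ℂ[Γ]`. -/
def rho (G : Type*) [Group G] : MonoidAlgebra ℂ (Gam G) :=
  MonoidAlgebra.of ℂ (Gam G) (rhoEl G)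

/-- `T = Σ_{g ∈ G} g ∈ ℂ[Γ]`. -/
def Tsum (G : Type*) [Group G] [Fintype G] : MonoidAlgebra ℂ (Gam G) :=
  ∑ g : G, emb g

/-- `Σ_{x ∈ H} a·x·b ∈ ℂ[Γ]`. -/
def cosetSum {G : Type*} [Group G] [Fintype G] (H : Subgroup G) [DecidablePred (· ∈ H)]
    (a b : G) : MonoidAlgebra ℂ (Gam G) :=
  ∑ x : H, emb (a * (x : G) * b)

/-- `Φ_S = T + (ρ-1)·Σ_{i∈S} Σ_{x∈H} σ_i x ∈ ℂ[Γ]`, the CM type attached to `S`. -/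
def Phi {G : Type*} [Group G] [Fintype G] (H : Subgroup G) [DecidablePred (· ∈ H)] {n : ℕ}
    (σ : Fin n → G) (S : Finset (Fin n)) : MonoidAlgebra ℂ (Gam G) :=
  Tsum G + (rho G - 1) * ∑ i ∈ S, cosetSum H (σ i) 1

/-- The ℂ-linear map `ι : ℂ[Γ] → ℂ[Γ]` sending each `γ ∈ Γ` to `γ⁻¹`. -/
def iota (Γ : Type*) [Group Γ] : MonoidAlgebra ℂ Γ →ₗ[ℂ] MonoidAlgebra ℂ Γ :=
  MonoidAlgebra.mapDomainLinearMap ℂ ℂ fun γ : Γ => γ⁻¹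

/-- `A_{Φ_S} = (1/(2hn))·Φ_S·ι(Φ_S)`. -/
def Afun {G : Type*} [Group G] [Fintype G] (H : Subgroup G) [DecidablePred (· ∈ H)] {n : ℕ}
    (σ : Fin n → G) (S : Finset (Fin n)) : MonoidAlgebra ℂ (Gam G) :=
  ((2 * (Nat.card H) * n : ℂ))⁻¹ • (Phi H σ S * iota (Gam G) (Phi H σ S))

/-- `A⁰_{Φ_S} = (1/|Γ|)·Σ_{γ∈Γ} γ·A_{Φ_S}·γ⁻¹`. -/
def A0 {G : Type*} [Group G] [Fintype G] (H : Subgroup G) [DecidablePred (· ∈ H)] {n : ℕ}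
    (σ : Fin n → G) (S : Finset (Fin n)) : MonoidAlgebra ℂ (Gam G) :=
  ((Fintype.card (Gam G) : ℂ))⁻¹ •
    ∑ γ : Gam G, MonoidAlgebra.of ℂ (Gam G) γ * Afun H σ S * MonoidAlgebra.of ℂ (Gam G) γ⁻¹

/-! Since `ρ² = 1` and `ρ` is central, `(1 + ρ)(ρ - 1) = 0`; hence `(1 + ρ)·Φ_S = (1 + ρ)·T` and
`ι(Φ_S) = T + ι(X)(ρ - 1)` with `X = Σ_{i∈S} Σ_{x∈H} σ_i x`, so
`(1 + ρ)·Φ_S·ι(Φ_S) = (1 + ρ)·T² = |G|·(1 + ρ)·T = |G|·Σ_{γ∈Γ} γ`.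
As `|G| = hn`, this gives `(1 + ρ)·A_{Φ_S} = ½ Σ_{γ∈Γ} γ`, and averaging over conjugates changes
nothing because `1 + ρ` is central and `Σ_{γ∈Γ} γ` is conjugation invariant. -/

section GroupAlgebra

variable {k Γ : Type*} [Semiring k] [Group Γ] [Fintype Γ]

lemma MonoidAlgebra.of_mul_sum_of (g : Γ) : of k Γ g * ∑ γ, of k Γ γ = ∑ γ, of k Γ γ := by
  rw [Finset.mul_sum]
  exact Fintype.sum_equiv (Equiv.mulLeft g) _ _ fun γ => by simp

lemma MonoidAlgebra.sum_of_mul_of (g : Γ) : (∑ γ, of k Γ γ) * of k Γ g = ∑ γ, of k Γ γ := by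
  rw [Finset.sum_mul]
  exact Fintype.sum_equiv (Equiv.mulRight g) _ _ fun γ => by simp

lemma MonoidAlgebra.coeff_sum_of (g : Γ) : (∑ γ, of k Γ γ).coeff g = 1 := by
  classical
  simp [coeff_sum, Finsupp.finsetSum_apply, coeff_single, Finsupp.single_apply]

end GroupAlgebra

section Iota

variable {Γ : Type*} [Group Γ]

lemma iota_single (γ : Γ) (c : ℂ) : iota Γ (single γ c) = single γ⁻¹ c :=
  mapDomainLinearMap_single _ _ _

lemma iota_mul (a b : MonoidAlgebra ℂ Γ) : iota Γ (a * b) = iota Γ b * iota Γ a := by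
  induction a using MonoidAlgebra.induction_linear with
  | zero => simp
  | add a a' ha ha' => rw [add_mul, map_add, ha, ha', map_add, mul_add]
  | single γ c =>
    induction b using MonoidAlgebra.induction_linear with
    | zero => simp
    | add b b' hb hb' => rw [mul_add, map_add, hb, hb', map_add, add_mul]
    | single γ' c' =>
      simp only [single_mul_single, iota_single, mul_inv_rev, mul_comm c c']

lemma iota_one : iota Γ 1 = 1 := by
  rw [one_def, iota_single, inv_one]

end Iota

section Conjugation

variable {G : Type*} [Group G]

lemma rhoEl_mul_self : rhoEl G * rhoEl G = 1 :=
  Prod.ext (one_mul 1) (show Multiplicative.ofAdd (1 : ZMod 2) * .ofAdd 1 = 1 by decide)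

lemma rhoEl_inv : (rhoEl G)⁻¹ = rhoEl G :=
  inv_eq_of_mul_eq_one_right rhoEl_mul_self

lemma commute_rhoEl (γ : Gam G) : Commute (rhoEl G) γ :=
  Prod.ext (Commute.one_left γ.1).eq (mul_comm _ _)

lemma rho_mul_self : rho G * rho G = 1 := by
  rw [rho, of_apply, single_mul_single, rhoEl_mul_self, mul_one, one_def]

lemma commute_rho (a : MonoidAlgebra ℂ (Gam G)) : Commute (rho G) a :=
  single_commute commute_rhoEl Commute.one_left a

lemma one_add_rho_mul_rho_sub_one : (1 + rho G) * (rho G - 1) = 0 := by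
  rw [add_comm, ← mul_self_sub_one, rho_mul_self, sub_self]

lemma iota_rho : iota (Gam G) (rho G) = rho G := by
  rw [rho, of_apply, iota_single, rhoEl_inv]

lemma coeff_rho_mul (a : MonoidAlgebra ℂ (Gam G)) (γ : Gam G) :
    (rho G * a).coeff γ = a.coeff (rhoEl G * γ) := by
  rw [rho, of_apply, coeff_single_mul_apply, rhoEl_inv, one_mul]

end Conjugation

section Tsum

variable {G : Type*} [Group G] [Fintype G]

lemma emb_mul_Tsum (g : G) : emb g * Tsum G = Tsum G := by
  rw [Tsum, Finset.mul_sum]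
  exact Fintype.sum_equiv (Equiv.mulLeft g) _ _ fun x => by
    simp only [emb, of_apply, single_mul_single, Prod.mk_mul_mk, mul_one]; rfl

lemma Tsum_mul_Tsum : Tsum G * Tsum G = (Fintype.card G : ℂ) • Tsum G := by
  nth_rewrite 1 [Tsum]
  rw [Finset.sum_mul]
  simp only [emb_mul_Tsum, Finset.sum_const, Finset.card_univ, ← Nat.cast_smul_eq_nsmul ℂ]

lemma iota_Tsum : iota (Gam G) (Tsum G) = Tsum G := by
  rw [Tsum, map_sum]
  exact Fintype.sum_equiv (Equiv.inv G) _ _ fun x => by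
    simp only [emb, of_apply, iota_single, Prod.inv_mk, inv_one]; rfl

lemma one_add_rho_mul_Tsum : (1 + rho G) * Tsum G = ∑ γ : Gam G, of ℂ (Gam G) γ := by
  rw [one_add_mul, Tsum, Finset.mul_sum, ← Finset.sum_add_distrib, Fintype.sum_prod_type]
  refine Finset.sum_congr rfl fun g _ => ?_
  rw [show (Finset.univ : Finset (Multiplicative (ZMod 2))) = {1, Multiplicative.ofAdd 1} by decide,
    Finset.sum_pair (by decide)]
  simp only [emb, rho, rhoEl, of_apply, single_mul_single, Prod.mk_mul_mk, one_mul, mul_one]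

end Tsum

section CMType

variable {G : Type*} [Group G] [Fintype G] {H : Subgroup G} {n : ℕ} {σ : Fin n → G}

lemma card_eq_card_subgroup_mul
    (hσ : Function.Bijective fun i : Fin n => (QuotientGroup.mk (σ i) : G ⧸ H)) :
    Fintype.card G = Nat.card H * n := by
  rw [← Nat.card_eq_fintype_card, Subgroup.card_eq_card_quotient_mul_card_subgroup H,
    ← Nat.card_eq_of_bijective _ hσ, Nat.card_eq_fintype_card, Fintype.card_fin, mul_comm]

variable [DecidablePred (· ∈ H)] {S : Finset (Fin n)}

lemma one_add_rho_mul_Phi_mul_iota_Phi :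
    (1 + rho G) * (Phi H σ S * iota (Gam G) (Phi H σ S))
      = (Fintype.card G : ℂ) • ∑ γ : Gam G, of ℂ (Gam G) γ := by
  set X := ∑ i ∈ S, cosetSum H (σ i) 1
  have h_left : (1 + rho G) * Phi H σ S = (1 + rho G) * Tsum G := by
    rw [Phi, mul_add, ← mul_assoc, one_add_rho_mul_rho_sub_one, zero_mul, add_zero]
  have h_right : iota (Gam G) (Phi H σ S) = Tsum G + iota (Gam G) X * (rho G - 1) := by
    rw [Phi, map_add, iota_Tsum, iota_mul, map_sub, iota_rho, iota_one]
  have h_cross : (1 + rho G) * Tsum G * (iota (Gam G) X * (rho G - 1)) = 0 := by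
    have h_central : Commute (rho G - 1) (Tsum G * iota (Gam G) X) :=
      (commute_rho _).sub_left (Commute.one_left _)
    rw [← mul_assoc, mul_assoc _ (Tsum G), mul_assoc, ← h_central.eq, ← mul_assoc,
      one_add_rho_mul_rho_sub_one, zero_mul]
  rw [← mul_assoc, h_left, h_right, mul_add, h_cross, add_zero, mul_assoc, Tsum_mul_Tsum,
    mul_smul_comm, one_add_rho_mul_Tsum]

lemma one_add_rho_mul_Afun
    (hσ : Function.Bijective fun i : Fin n => (QuotientGroup.mk (σ i) : G ⧸ H)) :
    (1 + rho G) * Afun H σ S = (2 : ℂ)⁻¹ • ∑ γ : Gam G, of ℂ (Gam G) γ := by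
  have h_card : (Fintype.card G : ℂ) = Nat.card H * n := by
    exact_mod_cast card_eq_card_subgroup_mul hσ
  obtain ⟨h_H, h_n⟩ : (Nat.card H : ℂ) ≠ 0 ∧ (n : ℂ) ≠ 0 :=
    mul_ne_zero_iff.mp (h_card ▸ Nat.cast_ne_zero.mpr Fintype.card_ne_zero)
  rw [Afun, mul_smul_comm, one_add_rho_mul_Phi_mul_iota_Phi, smul_smul, h_card]
  congr 1
  field_simp

lemma one_add_rho_mul_A0
    (hσ : Function.Bijective fun i : Fin n => (QuotientGroup.mk (σ i) : G ⧸ H)) :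
    (1 + rho G) * A0 H σ S = (2 : ℂ)⁻¹ • ∑ γ : Gam G, of ℂ (Gam G) γ := by
  have h_conj (γ : Gam G) :
      (1 + rho G) * (of ℂ (Gam G) γ * Afun H σ S * of ℂ (Gam G) γ⁻¹)
        = (2 : ℂ)⁻¹ • ∑ γ : Gam G, of ℂ (Gam G) γ := by
    have h_central : Commute (1 + rho G) (of ℂ (Gam G) γ) :=
      (Commute.one_left _).add_left (commute_rho _)
    rw [← mul_assoc, ← mul_assoc, h_central.eq, mul_assoc _ (1 + rho G), one_add_rho_mul_Afun hσ,
      mul_smul_comm, smul_mul_assoc, of_mul_sum_of, sum_of_mul_of]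
  have h_card : (Fintype.card (Gam G) : ℂ) ≠ 0 := Nat.cast_ne_zero.mpr Fintype.card_ne_zero
  rw [A0, mul_smul_comm, Finset.mul_sum, Finset.sum_congr rfl fun γ _ => h_conj γ,
    Finset.sum_const, Finset.card_univ, ← Nat.cast_smul_eq_nsmul ℂ, smul_smul,
    inv_mul_cancel₀ h_card, one_smul]

end CMType

/-- `A⁰_{Φ_S} + ρ·A⁰_{Φ_S} = (1/2)·Σ_{γ∈Γ} γ`; equivalently, as a function on `Γ`,
`A⁰_{Φ_S}(γ) + A⁰_{Φ_S}(ργ) = 1/2` for every `γ`, i.e. `A⁰_{Φ_S}` lies in `𝒞ℳ⁰`. -/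
theorem A0_mem_CM0 {G : Type*} [Group G] [Fintype G] (H : Subgroup G) [DecidablePred (· ∈ H)]
    {n : ℕ} (σ : Fin n → G)
    (hσ : Function.Bijective fun i : Fin n => (QuotientGroup.mk (σ i) : G ⧸ H))
    (S : Finset (Fin n)) :
    A0 H σ S + rho G * A0 H σ S
        = (2 : ℂ)⁻¹ • ∑ γ : Gam G, MonoidAlgebra.of ℂ (Gam G) γ
      ∧ ∀ γ : Gam G, (A0 H σ S).coeff γ + (A0 H σ S).coeff (rhoEl G * γ) = 1 / 2 := by
  have h_sum : A0 H σ S + rho G * A0 H σ S = (2 : ℂ)⁻¹ • ∑ γ : Gam G, of ℂ (Gam G) γ := by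
    rw [← one_add_mul, one_add_rho_mul_A0 hσ]
  refine ⟨h_sum, fun γ => ?_⟩
  have h_coeff := congrArg (fun a => a.coeff γ) h_sum
  simpa only [coeff_add, Finsupp.add_apply, coeff_rho_mul, coeff_smul_apply, coeff_sum_of,
    smul_eq_mul, mul_one, one_div] using h_coeff

end
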